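/- Let K = ℚ(i,√5), F = ℚ(i), σ the F-automorphism with σ(√5) = −√5. For k₀, k₁ in the ring of integers O_K, the determinant of the matrix [[k₀, i·σ(k₁)],[k₁, σ(k₀)]], namely k₀σ(k₀) − i·k₁σ(k₁), lies in ℤ[i]. Moreover if (k₀,k₁) ≠ (0,0), this determinant has absolute value at least 1. -/

import Mathlib

/-!
The determinant is `N(k₀) - i N(k₁)`, where `N(a + bφ) = (a + bφ)(a + bψ) = a² + ab - b² ∈ ℤ[i]`,
so it is a Gaussian integer and it suffices to show that it does not vanish. Modulo either prime
`2 ± i` above `5` we have `N(a + bφ) ≡ (a + 3b)²`, while `i` reduces to a non-square; hence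
`N(k₀) = i N(k₁)` forces `5 ∣ a + 3b` for both `k₀` and `k₁`. Then `5` divides both norms and
infinite descent on the norm gives `N(k₀) = N(k₁) = 0`. Finally `N(a + bφ) = 0` forces
`a + bφ = 0`, because `ψ` is irrational.
-/

open Complex GaussianInt

noncomputable section

/-- The golden ratio `φ = (1+√5)/2` as a complex number. -/
def phi : ℂ := (1 + Real.sqrt 5) / 2

/-- Its conjugate `ψ = σ(φ) = (1−√5)/2`. -/
def psi : ℂ := (1 - Real.sqrt 5) / 2

/-- `N(a + bφ) = (a + bφ)(a + bψ)`, the relative norm of `ℤ[i][φ]` over `ℤ[i]`. -/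
def goldenForm {R : Type*} [CommRing R] (a b : R) : R := a ^ 2 + a * b - b ^ 2

theorem map_goldenForm {R S : Type*} [CommRing R] [CommRing S] (f : R →+* S) (a b : R) :
    f (goldenForm a b) = goldenForm (f a) (f b) := by
  simp only [goldenForm, map_sub, map_add, map_mul, map_pow]

/-- `(2z - b) + zφ = φ(a + bφ)/√5`, where `φ` has norm `-1` and `√5` has norm `-5`. -/
theorem goldenForm_eq_five_mul {R : Type*} [CommRing R] {a b z : R} (h : a + 3 * b = 5 * z) :
    goldenForm a b = 5 * goldenForm (2 * z - b) z := by
  unfold goldenForm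
  linear_combination (a - 2 * b + 5 * z) * h

namespace ZMod

theorem goldenForm_eq_sq (s t : ZMod 5) : goldenForm s t = (s + 3 * t) ^ 2 := by
  revert s t; decide

theorem eq_zero_of_sq_eq_mul_sq {r x y : ZMod 5} (hr : r * r = -1) (h : x ^ 2 = r * y ^ 2) :
    x = 0 ∧ y = 0 := by
  revert r x y; decide

end ZMod

theorem Irrational.eq_zero_of_intCast_add_intCast_mul_eq_zero {r : ℝ} (hr : Irrational r)
    {x y : ℤ} (h : x + y * r = 0) : x = 0 ∧ y = 0 := by
  obtain rfl : y = 0 := by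
    by_contra hy
    exact ((hr.intCast_mul hy).intCast_add x).ne_zero h
  simpa using h

theorem phi_add_psi : phi + psi = 1 := by
  rw [phi, psi]; ring

theorem phi_mul_psi : phi * psi = -1 := by
  have h := congrArg ((↑) : ℝ → ℂ) Real.goldenRatio_mul_goldenConj
  push_cast at h
  simpa [phi, psi] using h

theorem add_mul_phi_mul_add_mul_psi (x y : ℂ) :
    (x + y * phi) * (x + y * psi) = goldenForm x y := by
  unfold goldenForm
  linear_combination x * y * phi_add_psi + y ^ 2 * phi_mul_psi

namespace GaussianInt

/-- The reduction of `ℤ[i]` modulo the prime `i - r` above `5`, for `r = 2` or `r = 3`. -/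
def toZModFive (r : ZMod 5) (hr : r * r = -1) : GaussianInt →+* ZMod 5 :=
  Zsqrtd.lift ⟨r, by simpa using hr⟩

theorem toZModFive_apply {r : ZMod 5} (hr : r * r = -1) (x : GaussianInt) :
    toZModFive r hr x = x.re + x.im * r :=
  Zsqrtd.lift_apply_apply _ x

theorem toZModFive_sqrtd {r : ZMod 5} (hr : r * r = -1) : toZModFive r hr Zsqrtd.sqrtd = r := by
  simp [toZModFive_apply]

theorem five_dvd_of_toZModFive_eq_zero {x : GaussianInt} (h₂ : toZModFive 2 (by decide) x = 0)
    (h₃ : toZModFive 3 (by decide) x = 0) : (5 : GaussianInt) ∣ x := by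
  rw [toZModFive_apply] at h₂ h₃
  have hre : (x.re : ZMod 5) = 0 := by linear_combination 3 * h₂ - 2 * h₃
  have him : (x.im : ZMod 5) = 0 := by linear_combination h₃ - h₂
  rw [ZMod.intCast_zmod_eq_zero_iff_dvd] at hre him
  exact_mod_cast (Zsqrtd.intCast_dvd 5 x).mpr ⟨hre, him⟩

theorem toZModFive_add_three_mul_eq_zero {r : ZMod 5} (hr : r * r = -1) {a b c d : GaussianInt}
    (h : goldenForm a b = Zsqrtd.sqrtd * goldenForm c d) :
    toZModFive r hr (a + 3 * b) = 0 ∧ toZModFive r hr (c + 3 * d) = 0 := by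
  have h' := congrArg (toZModFive r hr) h
  rw [map_mul, map_goldenForm, map_goldenForm, toZModFive_sqrtd, ZMod.goldenForm_eq_sq,
    ZMod.goldenForm_eq_sq] at h'
  simp only [map_add, map_mul, map_ofNat]
  exact ZMod.eq_zero_of_sq_eq_mul_sq hr h'

theorem five_dvd_add_three_mul {a b c d : GaussianInt}
    (h : goldenForm a b = Zsqrtd.sqrtd * goldenForm c d) :
    (5 : GaussianInt) ∣ a + 3 * b ∧ (5 : GaussianInt) ∣ c + 3 * d := by
  obtain ⟨hab₂, hcd₂⟩ := toZModFive_add_three_mul_eq_zero (r := 2) (by decide) h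
  obtain ⟨hab₃, hcd₃⟩ := toZModFive_add_three_mul_eq_zero (r := 3) (by decide) h
  exact ⟨five_dvd_of_toZModFive_eq_zero hab₂ hab₃, five_dvd_of_toZModFive_eq_zero hcd₂ hcd₃⟩

/-- Infinite descent: both sides are divisible by `5`, and dividing by it lowers the norm. -/
theorem goldenForm_eq_zero_of_eq_sqrtd_mul {a b c d : GaussianInt}
    (h : goldenForm a b = Zsqrtd.sqrtd * goldenForm c d) : goldenForm a b = 0 := by
  induction hn : (goldenForm a b).norm.natAbs using Nat.strong_induction_on
    generalizing a b c d with
  | _ n ih =>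
    by_contra hne
    obtain ⟨⟨z, hz⟩, ⟨w, hw⟩⟩ := five_dvd_add_three_mul h
    have hab := goldenForm_eq_five_mul hz
    have hcd := goldenForm_eq_five_mul hw
    have h' : goldenForm (2 * z - b) z = Zsqrtd.sqrtd * goldenForm (2 * w - d) w := by
      apply mul_left_cancel₀ (show (5 : GaussianInt) ≠ 0 by decide)
      linear_combination h - hab + Zsqrtd.sqrtd * hcd
    have hne' : goldenForm (2 * z - b) z ≠ 0 := fun h0 => hne (by rw [hab, h0, mul_zero])
    have hlt : (goldenForm (2 * z - b) z).norm.natAbs < n := by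
      have hpos := Int.natAbs_pos.mpr (norm_pos.mpr hne').ne'
      rw [← hn, hab, Zsqrtd.norm_mul, Int.natAbs_mul, show (Zsqrtd.norm 5).natAbs = 25 by decide]
      omega
    exact hne' (ih _ hlt h' rfl)

theorem one_le_norm_toComplex {g : GaussianInt} (hg : g ≠ 0) : 1 ≤ ‖(g : ℂ)‖ := by
  have hnorm : (1 : ℝ) ≤ ‖(g : ℂ)‖ ^ 2 := by
    rw [← Complex.normSq_eq_norm_sq, ← intCast_real_norm]
    exact_mod_cast norm_pos.mpr hg
  nlinarith [_root_.norm_nonneg (g : ℂ)]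

theorem eq_zero_of_add_mul_psi_eq_zero {a b : GaussianInt} (h : (a : ℂ) + b * psi = 0) :
    a = 0 ∧ b = 0 := by
  rw [show psi = (Real.goldenConj : ℂ) by simp [psi]] at h
  have hre : (a.re : ℝ) + b.re * Real.goldenConj = 0 := by
    simpa only [add_re, re_ofReal_mul, mul_re, ofReal_re, ofReal_im, mul_zero, sub_zero,
      intCast_re, zero_re] using congrArg re h
  have him : (a.im : ℝ) + b.im * Real.goldenConj = 0 := by
    simpa only [add_im, mul_im, ofReal_re, ofReal_im, mul_zero, zero_add,
      intCast_im, zero_im] using congrArg im h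
  obtain ⟨hare, hbre⟩ := Real.goldenConj_irrational.eq_zero_of_intCast_add_intCast_mul_eq_zero hre
  obtain ⟨haim, hbim⟩ := Real.goldenConj_irrational.eq_zero_of_intCast_add_intCast_mul_eq_zero him
  exact ⟨Zsqrtd.ext hare haim, Zsqrtd.ext hbre hbim⟩

theorem add_mul_phi_eq_zero_of_goldenForm_eq_zero {a b : GaussianInt}
    (h : goldenForm a b = 0) : (a : ℂ) + b * phi = 0 := by
  have h' := congrArg toComplex h
  rw [map_goldenForm, ← add_mul_phi_mul_add_mul_psi, toComplex_zero] at h'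
  rcases mul_eq_zero.mp h' with hφ | hψ
  · exact hφ
  · obtain ⟨rfl, rfl⟩ := eq_zero_of_add_mul_psi_eq_zero hψ
    simp

end GaussianInt

/-- Nonvanishing determinant property of the Golden Code: for `k₀, k₁` in the ring of
integers `O_K = ℤ[i][φ]` of `K = ℚ(i,√5)` (written `kⱼ = aⱼ + bⱼφ` with `aⱼ, bⱼ ∈ ℤ[i]`,
so `σ(kⱼ) = aⱼ + bⱼψ`), the determinant `k₀σ(k₀) − i·k₁σ(k₁)` of
`[[k₀, i·σ(k₁)],[k₁, σ(k₀)]]` lies in `ℤ[i]`, and has absolute value at least `1`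
whenever `(k₀, k₁) ≠ (0, 0)`. -/
theorem stmt_10 (a₀ b₀ a₁ b₁ : GaussianInt) :
    (∃ g : GaussianInt, (toComplex g : ℂ) =
        ((toComplex a₀ + toComplex b₀ * phi) * (toComplex a₀ + toComplex b₀ * psi)
          - Complex.I * ((toComplex a₁ + toComplex b₁ * phi) *
              (toComplex a₁ + toComplex b₁ * psi)))) ∧
    (¬ ((toComplex a₀ + toComplex b₀ * phi = 0) ∧ (toComplex a₁ + toComplex b₁ * phi = 0)) →
      1 ≤ norm
        ((toComplex a₀ + toComplex b₀ * phi) * (toComplex a₀ + toComplex b₀ * psi)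
          - Complex.I * ((toComplex a₁ + toComplex b₁ * phi) *
              (toComplex a₁ + toComplex b₁ * psi)))) := by
  have hdet : toComplex (goldenForm a₀ b₀ - Zsqrtd.sqrtd * goldenForm a₁ b₁) =
      (toComplex a₀ + toComplex b₀ * phi) * (toComplex a₀ + toComplex b₀ * psi)
        - Complex.I * ((toComplex a₁ + toComplex b₁ * phi) *
            (toComplex a₁ + toComplex b₁ * psi)) := by
    rw [map_sub, map_mul, map_goldenForm, map_goldenForm, ← add_mul_phi_mul_add_mul_psi,
      ← add_mul_phi_mul_add_mul_psi, show toComplex Zsqrtd.sqrtd = I by simp [toComplex_def]]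
  refine ⟨⟨_, hdet⟩, fun hne => ?_⟩
  rw [← hdet]
  refine one_le_norm_toComplex fun hdet₀ => hne ?_
  have h₀ := goldenForm_eq_zero_of_eq_sqrtd_mul (sub_eq_zero.mp hdet₀)
  have h₁ : goldenForm a₁ b₁ = 0 := by
    simpa [h₀, show (Zsqrtd.sqrtd : GaussianInt) ≠ 0 by decide] using sub_eq_zero.mp hdet₀
  exact ⟨add_mul_phi_eq_zero_of_goldenForm_eq_zero h₀, add_mul_phi_eq_zero_of_goldenForm_eq_zero h₁⟩

end
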